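/- arXiv:2108.09089 — 5 statements merged into one kernel-verified Lean document; each statement's English description precedes it below -/
import Mathlib

section
/- Let ω : (0,∞) → ℝ be nonnegative and nondecreasing, and let a > 0. Then for all s > 0, ∫₀ˢ exp(-a·ω(t)/t) dt ≥ (s²/(2s + a·ω(s))) · exp(-a·ω(s)/s). -/
open MeasureTheory Real

/-!
With `M = a ω(s)`, monotonicity of `ω` gives `exp (-(a ω(t) / t)) ≥ exp (-(M / t))` on `(0, s)`,
so it suffices to bound `∫₀ˢ exp (-(M / t)) dt`. Since
`d/dt (t² exp (-(M / t))) = (2t + M) exp (-(M / t)) ≤ (2s + M) exp (-(M / t))` for `t ≤ s`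
and `t² exp (-(M / t)) → 0` as `t → 0⁺`, integrating over `(0, s)` gives
`s² exp (-(M / s)) ≤ (2s + M) ∫₀ˢ exp (-(M / t)) dt`.
-/

open Set Filter Topology

theorem hasDerivAt_sq_mul_exp_neg_div (M : ℝ) {t : ℝ} (ht : t ≠ 0) :
    HasDerivAt (fun t => t ^ 2 * exp (-(M / t))) ((2 * t + M) * exp (-(M / t))) t := by
  have hexp := ((hasDerivAt_const t M).fun_div (hasDerivAt_id' t) ht).fun_neg.exp
  exact ((hasDerivAt_pow 2 t).mul hexp).congr_deriv (by field_simp; ring)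

/-- At `t = 0` the function takes the value `0 ^ 2 * exp (-(M / 0)) = 0` (as `M / 0 = 0`),
which is its limit from the right. -/
theorem continuousOn_sq_mul_exp_neg_div {M : ℝ} (hM : 0 ≤ M) :
    ContinuousOn (fun t => t ^ 2 * exp (-(M / t))) (Ici 0) := by
  intro t ht
  rcases (mem_Ici.mp ht).eq_or_lt with rfl | ht
  · have hbound : ∀ u ∈ Ici (0 : ℝ), ‖u ^ 2 * exp (-(M / u))‖ ≤ u ^ 2 := fun u hu => by
      rw [norm_mul, norm_of_nonneg (exp_pos _).le, norm_pow, norm_of_nonneg hu]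
      exact mul_le_of_le_one_right (by positivity)
        (exp_le_one_iff.mpr (neg_nonpos.mpr (div_nonneg hM hu)))
    have hsq : Tendsto (fun u : ℝ => u ^ 2) (𝓝[Ici 0] 0) (𝓝 0) := by
      simpa using ((continuous_pow 2).tendsto (0 : ℝ)).mono_left nhdsWithin_le_nhds
    simpa [ContinuousWithinAt] using
      squeeze_zero_norm' (eventually_nhdsWithin_of_forall hbound) hsq
  · exact (hasDerivAt_sq_mul_exp_neg_div M ht.ne').continuousAt.continuousWithinAt

theorem integrableOn_exp_neg_of_nonneg {α : Type*} [MeasurableSpace α] {μ : Measure α}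
    {ψ : α → ℝ} {S : Set α} (hSm : MeasurableSet S) (hS : μ S ≠ ⊤)
    (hψ : AEMeasurable ψ (μ.restrict S)) (hψ0 : ∀ t ∈ S, 0 ≤ ψ t) :
    IntegrableOn (fun t => exp (-ψ t)) S μ := by
  have : Fact (μ S < ⊤) := ⟨hS.lt_top⟩
  refine (integrable_const (1 : ℝ)).mono'
    (measurable_exp.comp_aemeasurable hψ.neg).aestronglyMeasurable ?_
  filter_upwards [ae_restrict_mem hSm] with t ht
  rw [norm_of_nonneg (exp_pos _).le]
  exact exp_le_one_iff.mpr (neg_nonpos.mpr (hψ0 t ht))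

theorem integral_Ioo_add_mul_exp_neg_div {M s : ℝ} (hM : 0 ≤ M) (hs : 0 ≤ s) :
    ∫ t in Ioo 0 s, (2 * t + M) * exp (-(M / t)) = s ^ 2 * exp (-(M / s)) := by
  have hcont := (continuousOn_sq_mul_exp_neg_div hM).mono (Icc_subset_Ici_self : Icc 0 s ⊆ Ici 0)
  have hderiv : ∀ t ∈ Ioo 0 s, HasDerivAt (fun t => t ^ 2 * exp (-(M / t)))
      ((2 * t + M) * exp (-(M / t))) t := fun t ht =>
    hasDerivAt_sq_mul_exp_neg_div M ht.1.ne'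
  have hint := intervalIntegral.integrableOn_deriv_of_nonneg hcont hderiv fun t ht => by
    have := ht.1; positivity
  rw [← integral_Ioc_eq_integral_Ioo, ← intervalIntegral.integral_of_le hs,
    intervalIntegral.integral_eq_sub_of_hasDerivAt_of_le hs hcont hderiv
      ((intervalIntegrable_iff_integrableOn_Ioc_of_le hs).mpr hint)]
  simp

theorem div_mul_exp_neg_div_le_integral_Ioo {M s : ℝ} (hM : 0 ≤ M) (hs : 0 < s) :
    s ^ 2 / (2 * s + M) * exp (-(M / s)) ≤ ∫ t in Ioo 0 s, exp (-(M / t)) := by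
  have hint : IntegrableOn (fun t => exp (-(M / t))) (Ioo 0 s) :=
    integrableOn_exp_neg_of_nonneg measurableSet_Ioo measure_Ioo_lt_top.ne (by fun_prop)
      fun t ht => div_nonneg hM ht.1.le
  rw [div_mul_eq_mul_div, div_le_iff₀ (by positivity), ← integral_Ioo_add_mul_exp_neg_div hM hs.le,
    mul_comm, ← integral_const_mul]
  refine integral_mono_of_nonneg ?_ (hint.const_mul _) ?_ <;>
    filter_upwards [ae_restrict_mem measurableSet_Ioo] with t ht
  · have := ht.1; positivity
  · gcongr; exact ht.2.le

theorem stmt0 (ω : ℝ → ℝ) (hω0 : ∀ t > (0:ℝ), 0 ≤ ω t)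
    (hmono : ∀ t₁ t₂ : ℝ, 0 < t₁ → t₁ ≤ t₂ → ω t₁ ≤ ω t₂)
    (a : ℝ) (ha : 0 < a) :
    ∀ s > (0:ℝ),
      s ^ 2 / (2 * s + a * ω s) * Real.exp (-(a * ω s / s)) ≤
        ∫ t in Set.Ioo (0:ℝ) s, Real.exp (-(a * ω t / t)) := by
  intro s hs
  have hω : AEMeasurable ω (volume.restrict (Ioo 0 s)) :=
    aemeasurable_restrict_of_monotoneOn measurableSet_Ioo fun x hx y _ hxy => hmono x y hx.1 hxy
  refine (div_mul_exp_neg_div_le_integral_Ioo (mul_nonneg ha.le (hω0 s hs)) hs).trans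
    (integral_mono_of_nonneg ?_ ?_ ?_)
  · exact Eventually.of_forall fun t => (exp_pos _).le
  · exact integrableOn_exp_neg_of_nonneg measurableSet_Ioo measure_Ioo_lt_top.ne
      ((hω.const_mul a).div aemeasurable_id)
      fun t ht => div_nonneg (mul_nonneg ha.le (hω0 t ht.1)) ht.1.le
  · filter_upwards [ae_restrict_mem measurableSet_Ioo] with t ht
    gcongr
    exacts [ht.1.le, hmono t s ht.1 ht.2.le]
end

section
/- Let p > 1, c > 0, and h : (0, s̄) → (0, ∞) be continuous. Suppose I : (0, s̄) → [0, ∞) is differentiable, nonincreasing, and satisfies I(s) ≤ c · h(s)^{-1/(p+1)} · (-I'(s))^{(p+3)/(2(p+1))} for all s ∈ (0, s̄). Then there is a constant d (depending only on c and p, not on I) such that I(s) ≤ d · (∫₀ˢ h(r)^{2/(p+3)} dr)^{-(p+3)/(p-1)} for all s ∈ (0, s̄). -/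
/-!
Put `β = (p-1)/(p+3)` and `γ = 2(p+1)/(p+3) = 1 + β`. Raising the differential inequality to the
power `γ` gives `h^(2/(p+3)) ≤ c^γ (-I') I^(-γ) = (c^γ/β) (I^(-β))'`. Integrating over `(x, s)` and
discarding the nonnegative term `I(x)^(-β)` bounds `∫_x^s h^(2/(p+3))` by `(c^γ/β) I(s)^(-β)`
uniformly in `x`, so the improper integral over `(0, s)` obeys the same bound; raising it to the
power `-1/β = -(p+3)/(p-1)` gives the estimate with `d = (β / c^γ)^(-(p+3)/(p-1))`.
-/

open MeasureTheory Real Filter Set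

lemma HasDerivAt.nonpos_of_antitoneOn_of_isOpen {g : ℝ → ℝ} {g' x : ℝ} {U : Set ℝ}
    (hU : IsOpen U) (hx : x ∈ U) (hd : HasDerivAt g g' x) (hg : AntitoneOn g U) : g' ≤ 0 :=
  hd.hasDerivWithinAt.nonpos_of_antitoneOn
    (by simpa using PerfectSpace.univ_preperfect.open_inter hU x ⟨hx, mem_univ x⟩) hg

lemma rpow_le_mul_rpow_neg_of_le_mul_rpow {a b x y q r : ℝ} (ha : 0 < a) (hb : 0 < b)
    (hx : 0 < x) (hy : 0 ≤ y) (hq : 0 < q) (h : x ≤ b * a ^ (-r) * y ^ q) :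
    a ^ (r * q⁻¹) ≤ b ^ q⁻¹ * y * x ^ (-q⁻¹) := by
  have hbq : 0 ≤ b * a ^ (-r) := by positivity
  have hxq : x ^ q⁻¹ ≤ (b * a ^ (-r)) ^ q⁻¹ * y := by
    rw [rpow_inv_le_iff_of_pos hx.le (by positivity) hq, mul_rpow (by positivity) hy,
      rpow_inv_rpow hbq hq.ne']
    exact h
  rw [mul_rpow hb.le (by positivity), ← rpow_mul ha.le] at hxq
  calc a ^ (r * q⁻¹) = a ^ (r * q⁻¹) * x ^ (-q⁻¹) * x ^ q⁻¹ := by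
        rw [mul_assoc, ← rpow_add hx, neg_add_cancel, rpow_zero, mul_one]
    _ ≤ a ^ (r * q⁻¹) * x ^ (-q⁻¹) * (b ^ q⁻¹ * a ^ (-r * q⁻¹) * y) := by gcongr
    _ = b ^ q⁻¹ * y * x ^ (-q⁻¹) := by
        rw [neg_mul, rpow_neg ha.le]
        field_simp

lemma le_mul_rpow_of_mul_le_rpow_neg {k X x β : ℝ} (hk : 0 < k) (hX : 0 < X) (hx : 0 < x)
    (hβ : 0 < β) (h : k * X ≤ x ^ (-β)) : x ≤ k ^ (-β⁻¹) * X ^ (-β⁻¹) := by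
  calc x = (x ^ (-β)) ^ (-β⁻¹) := by
        rw [← rpow_mul hx.le, neg_mul_neg, mul_inv_cancel₀ hβ.ne', rpow_one]
    _ ≤ (k * X) ^ (-β⁻¹) := rpow_le_rpow_of_nonpos (by positivity) h (by simp [hβ.le])
    _ = k ^ (-β⁻¹) * X ^ (-β⁻¹) := mul_rpow hk.le hX.le

lemma intervalIntegrable_and_integral_le_of_forall_integral_le {g : ℝ → ℝ} {a b M : ℝ}
    (hab : a < b) (hg : ContinuousOn g (Ioc a b)) (hg0 : ∀ t ∈ Ioc a b, 0 ≤ g t)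
    (hM : ∀ x ∈ Ioo a b, ∫ t in x..b, g t ≤ M) :
    IntervalIntegrable g volume a b ∧ ∫ t in a..b, g t ≤ M := by
  obtain ⟨u, -, hu, hlim⟩ := exists_seq_strictAnti_tendsto' hab
  have hIcc : ∀ n, IntegrableOn g (Icc (u n) b) := fun n =>
    (hg.mono (Icc_subset_Ioc (hu n).1 le_rfl)).integrableOn_compact isCompact_Icc
  have hint : IntegrableOn g (Ioc a b) := by
    refine integrableOn_Ioc_of_intervalIntegral_norm_bounded_left
      (fun n => (hIcc n).mono_set Ioc_subset_Icc_self) hlim (I := M) (Eventually.of_forall ?_)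
    intro n
    rw [setIntegral_congr_fun measurableSet_Ioc fun t ht =>
      norm_of_nonneg (hg0 t (Ioc_subset_Ioc_left (hu n).1.le ht)),
      ← intervalIntegral.integral_of_le (hu n).2.le]
    exact hM _ (hu n)
  have hintIcc : IntegrableOn g (uIcc a b) := by
    rwa [uIcc_of_le hab.le, integrableOn_Icc_iff_integrableOn_Ioc]
  have hconv : Tendsto (fun n => ∫ t in u n..b, g t) atTop (nhds (∫ t in a..b, g t)) :=
    ((intervalIntegral.continuousOn_primitive_interval_left hintIcc).continuousWithinAt
      left_mem_uIcc).tendsto.comp (tendsto_nhdsWithin_iff.2 ⟨hlim, Eventually.of_forall fun n =>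
        by rw [uIcc_of_le hab.le]; exact Ioo_subset_Icc_self (hu n)⟩)
  exact ⟨(intervalIntegrable_iff_integrableOn_Ioc_of_le hab.le).2 hint,
    le_of_tendsto' hconv fun n => hM _ (hu n)⟩

lemma intervalIntegrable_and_integral_le_of_hasDerivAt {g G G' : ℝ → ℝ} {a b : ℝ} (hab : a < b)
    (hg : ContinuousOn g (Ioc a b)) (hg0 : ∀ t ∈ Ioc a b, 0 ≤ g t)
    (hG : ∀ t ∈ Ioc a b, HasDerivAt G (G' t) t) (hG0 : ∀ t ∈ Ioc a b, 0 ≤ G t)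
    (hgG : ∀ t ∈ Ioo a b, g t ≤ G' t) :
    IntervalIntegrable g volume a b ∧ ∫ t in a..b, g t ≤ G b := by
  refine intervalIntegrable_and_integral_le_of_forall_integral_le hab hg hg0 fun x hx => ?_
  have hsub : Icc x b ⊆ Ioc a b := Icc_subset_Ioc hx.1 le_rfl
  calc ∫ t in x..b, g t ≤ G b - G x :=
        intervalIntegral.integral_le_sub_of_hasDeriv_right_of_le hx.2.le
          (fun t ht => (hG t (hsub ht)).continuousAt.continuousWithinAt)
          (fun t ht => (hG t (hsub (Ioo_subset_Icc_self ht))).hasDerivWithinAt)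
          ((hg.mono hsub).integrableOn_compact isCompact_Icc)
          (fun t ht => hgG t ⟨hx.1.trans ht.1, ht.2⟩)
    _ ≤ G b := sub_le_self _ (hG0 x (hsub ⟨le_rfl, hx.2.le⟩))

-- The right-hand side is `(c^γ/β) (x^(-β))'` with `x' = y`, in the shape produced by
-- `HasDerivAt.rpow_const`.
lemma rpow_le_deriv_rpow_neg_of_le_mul_rpow {p c a x y : ℝ} (hp : 1 < p) (hc : 0 < c)
    (ha : 0 < a) (hx : 0 < x) (hy : y ≤ 0)
    (h : x ≤ c * a ^ (-(1:ℝ) / (p + 1)) * (-y) ^ ((p + 3) / (2 * (p + 1)))) :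
    a ^ ((2:ℝ) / (p + 3)) ≤ c ^ (2 * (p + 1) / (p + 3)) / ((p - 1) / (p + 3)) *
      (y * -((p - 1) / (p + 3)) * x ^ (-((p - 1) / (p + 3)) - 1)) := by
  have hp1 : 0 < p - 1 := by linarith
  have hq : 0 < (p + 3) / (2 * (p + 1)) := by positivity
  rw [neg_div] at h
  have key := rpow_le_mul_rpow_neg_of_le_mul_rpow ha hc hx (neg_nonneg.2 hy) hq h
  have hγ : ((p + 3) / (2 * (p + 1)))⁻¹ = 2 * (p + 1) / (p + 3) := inv_div _ _
  have hβ : -((p - 1) / (p + 3)) - 1 = -(2 * (p + 1) / (p + 3)) := by field_simp; ring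
  have hr : 1 / (p + 1) * (2 * (p + 1) / (p + 3)) = 2 / (p + 3) := by field_simp
  rw [hγ, hr] at key
  rw [hβ]
  convert key using 1
  field_simp

lemma intervalIntegrable_and_integral_rpow_le {p c s : ℝ} {h I I' : ℝ → ℝ} (hp : 1 < p)
    (hc : 0 < c) (hs : 0 < s) (hh : ContinuousOn h (Ioc 0 s)) (hh0 : ∀ t ∈ Ioc 0 s, 0 < h t)
    (hI : ∀ t ∈ Ioc 0 s, HasDerivAt I (I' t) t) (hIpos : ∀ t ∈ Ioc 0 s, 0 < I t)
    (hI' : ∀ t ∈ Ioo 0 s, I' t ≤ 0)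
    (hIle : ∀ t ∈ Ioo 0 s,
      I t ≤ c * h t ^ (-(1:ℝ) / (p + 1)) * (-I' t) ^ ((p + 3) / (2 * (p + 1)))) :
    IntervalIntegrable (fun t => h t ^ ((2:ℝ) / (p + 3))) volume 0 s ∧
      ∫ t in 0..s, h t ^ ((2:ℝ) / (p + 3)) ≤
        c ^ (2 * (p + 1) / (p + 3)) / ((p - 1) / (p + 3)) * I s ^ (-((p - 1) / (p + 3))) := by
  have hβ : 0 < (p - 1) / (p + 3) := div_pos (by linarith) (by linarith)
  refine intervalIntegrable_and_integral_le_of_hasDerivAt hs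
    (hh.rpow_const fun t ht => Or.inl (hh0 t ht).ne')
    (fun t ht => rpow_nonneg (hh0 t ht).le _)
    (fun t ht => ((hI t ht).rpow_const (Or.inl (hIpos t ht).ne')).const_mul _)
    (fun t ht => mul_nonneg (div_nonneg (by positivity) hβ.le) (rpow_nonneg (hIpos t ht).le _))
    fun t ht => rpow_le_deriv_rpow_neg_of_le_mul_rpow hp hc (hh0 t (Ioo_subset_Ioc_self ht))
      (hIpos t (Ioo_subset_Ioc_self ht)) (hI' t ht) (hIle t ht)

theorem stmt1 (p c : ℝ) (hp : 1 < p) (hc : 0 < c) :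
    ∃ d : ℝ, ∀ sbar : ℝ, 0 < sbar →
      ∀ h : ℝ → ℝ, ContinuousOn h (Set.Ioo 0 sbar) →
        (∀ s ∈ Set.Ioo (0:ℝ) sbar, 0 < h s) →
      ∀ I I' : ℝ → ℝ,
        (∀ s ∈ Set.Ioo (0:ℝ) sbar, 0 ≤ I s) →
        (∀ s ∈ Set.Ioo (0:ℝ) sbar, HasDerivAt I (I' s) s) →
        AntitoneOn I (Set.Ioo 0 sbar) →
        (∀ s ∈ Set.Ioo (0:ℝ) sbar,
          I s ≤ c * h s ^ (-(1:ℝ)/(p+1)) * (-I' s) ^ ((p+3)/(2*(p+1)))) →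
        ∀ s ∈ Set.Ioo (0:ℝ) sbar,
          I s ≤ d * (∫ r in Set.Ioo (0:ℝ) s, h r ^ ((2:ℝ)/(p+3))) ^ (-(p+3)/(p-1)) := by
  have hp1 : 0 < p - 1 := by linarith
  have hβ : 0 < (p - 1) / (p + 3) := div_pos hp1 (by linarith)
  have he : -(p + 3) / (p - 1) = -((p - 1) / (p + 3))⁻¹ := by rw [inv_div, neg_div]
  refine ⟨((p - 1) / (p + 3) / c ^ (2 * (p + 1) / (p + 3))) ^ (-(p + 3) / (p - 1)), ?_⟩
  intro sbar _ h hh hh0 I I' hI0 hI hIanti hIle s hs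
  have hsub : Ioc 0 s ⊆ Ioo 0 sbar := Ioc_subset_Ioo_right hs.2
  have hsub' : Ioo 0 s ⊆ Ioo 0 sbar := Ioo_subset_Ioc_self.trans hsub
  rcases (hI0 s hs).eq_or_lt with hIs | hIs
  · rw [← hIs]
    exact mul_nonneg (by positivity) (rpow_nonneg (setIntegral_nonneg measurableSet_Ioo
      fun r hr => rpow_nonneg (hh0 r (hsub' hr)).le _) _)
  obtain ⟨hint, hle⟩ := intervalIntegrable_and_integral_rpow_le hp hc hs.1 (hh.mono hsub)
    (fun t ht => hh0 t (hsub ht)) (fun t ht => hI t (hsub ht))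
    (fun t ht => hIs.trans_le (hIanti (hsub ht) hs ht.2))
    (fun t ht => (hI t (hsub' ht)).nonpos_of_antitoneOn_of_isOpen isOpen_Ioo (hsub' ht) hIanti)
    (fun t ht => hIle t (hsub' ht))
  have hX := intervalIntegral.intervalIntegral_pos_of_pos_on hint
    (fun r hr => rpow_pos_of_pos (hh0 r (hsub' hr)) _) hs.1
  rw [← integral_Ioc_eq_integral_Ioo, ← intervalIntegral.integral_of_le hs.1.le, he]
  refine le_mul_rpow_of_mul_le_rpow_neg (by positivity) hX hIs hβ ?_
  calc _ ≤ (p - 1) / (p + 3) / c ^ (2 * (p + 1) / (p + 3)) *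
        (c ^ (2 * (p + 1) / (p + 3)) / ((p - 1) / (p + 3)) * I s ^ (-((p - 1) / (p + 3)))) := by
        gcongr
    _ = I s ^ (-((p - 1) / (p + 3))) := by field_simp [hp1.ne']
end

section
/- Let c̃ > 0, s > 0, K̄ > 0, K̄^θ > 0 with 0 < θ < 1, and let J : [δ, b] → [0,∞) be differentiable and nonincreasing, satisfying J(τ) ≤ c̃·s·(-J'(τ)) + K̄^θ for all τ ∈ (δ, b), with J(δ) ≤ K̄. If τ* ∈ (δ, b) satisfies J(τ*) = 2K̄^θ and J(τ) > 2K̄^θ for all τ ∈ (δ, τ*), then τ* - δ ≤ 2c̃·s·(-ln 2 + (1-θ)·ln K̄). -/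
open Real

theorem stmt2 (ctil s Kbar θ δ b : ℝ) (hc : 0 < ctil) (hs : 0 < s) (hK : 0 < Kbar)
    (hKθ : 0 < Kbar ^ θ) (hθ : 0 < θ) (hθ1 : θ < 1) (hδb : δ < b)
    (J J' : ℝ → ℝ)
    (hJ0 : ∀ τ ∈ Set.Icc δ b, 0 ≤ J τ)
    (hdiff : ∀ τ ∈ Set.Icc δ b, HasDerivAt J (J' τ) τ)
    (hmono : AntitoneOn J (Set.Icc δ b))
    (hineq : ∀ τ ∈ Set.Ioo δ b, J τ ≤ ctil * s * (-J' τ) + Kbar ^ θ)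
    (hinit : J δ ≤ Kbar)
    (τstar : ℝ) (hτ : τstar ∈ Set.Ioo δ b)
    (hval : J τstar = 2 * Kbar ^ θ)
    (habove : ∀ τ ∈ Set.Ioo δ τstar, 2 * Kbar ^ θ < J τ) :
    τstar - δ ≤ 2 * ctil * s * (-Real.log 2 + (1 - θ) * Real.log Kbar) := by
  obtain ⟨hδτ, hτb⟩ := hτ
  have hcs : (0:ℝ) < 2 * ctil * s := by positivity
  -- subset facts
  have hsub : Set.Icc δ τstar ⊆ Set.Icc δ b := Set.Icc_subset_Icc le_rfl hτb.le
  have hpos : ∀ τ ∈ Set.Icc δ τstar, 0 < J τ := by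
    intro τ hτ'
    have h1 : J τstar ≤ J τ := hmono (hsub hτ') ⟨hδτ.le, hτb.le⟩ hτ'.2
    have : (0:ℝ) < 2 * Kbar ^ θ := by positivity
    linarith [hval ▸ h1]
  -- the auxiliary function
  set h : ℝ → ℝ := fun τ => Real.log (J τ) + τ * (2 * ctil * s)⁻¹ with hh
  have hder : ∀ τ ∈ Set.Icc δ τstar,
      HasDerivAt h (J' τ / J τ + (2 * ctil * s)⁻¹) τ := by
    intro τ hτ'
    have h2 : HasDerivAt (fun x : ℝ => x * (2 * ctil * s)⁻¹) ((2 * ctil * s)⁻¹) τ := by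
      simpa using (hasDerivAt_id τ).mul_const ((2 * ctil * s)⁻¹)
    exact ((hdiff τ (hsub hτ')).log (hpos τ hτ').ne').add h2
  have hanti : AntitoneOn h (Set.Icc δ τstar) := by
    have hint : interior (Set.Icc δ τstar) = Set.Ioo δ τstar := interior_Icc
    apply antitoneOn_of_deriv_nonpos (convex_Icc δ τstar)
    · exact fun τ hτ' => (hder τ hτ').continuousAt.continuousWithinAt
    · intro τ hτ'
      rw [hint] at hτ'
      exact ((hder τ ⟨hτ'.1.le, hτ'.2.le⟩).differentiableAt).differentiableWithinAt
    · intro τ hτ'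
      rw [hint] at hτ'
      have hτIcc : τ ∈ Set.Icc δ τstar := ⟨hτ'.1.le, hτ'.2.le⟩
      rw [(hder τ hτIcc).deriv]
      have hJpos := hpos τ hτIcc
      have hab := habove τ hτ'
      have hin := hineq τ ⟨hτ'.1, hτ'.2.trans hτb⟩
      -- J τ / 2 ≤ ctil * s * (-J' τ)
      have key : J τ / 2 ≤ ctil * s * (-J' τ) := by nlinarith
      have : J' τ / J τ ≤ -(2 * ctil * s)⁻¹ := by
        rw [div_le_iff₀ hJpos]
        nlinarith [mul_inv_cancel₀ hcs.ne', inv_pos.mpr hcs]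
      linarith
  have hmain := hanti (Set.left_mem_Icc.mpr hδτ.le) (Set.right_mem_Icc.mpr hδτ.le) hδτ.le
  -- h δ ≥ h τstar
  have hlogδ : Real.log (J δ) ≤ Real.log Kbar :=
    Real.log_le_log (hpos δ (Set.left_mem_Icc.mpr hδτ.le)) hinit
  have hlogτ : Real.log (J τstar) = Real.log 2 + θ * Real.log Kbar := by
    rw [hval, Real.log_mul (by norm_num) (ne_of_gt hKθ), Real.log_rpow hK]
  simp only [hh] at hmain
  rw [hlogτ] at hmain
  have h1 : (τstar - δ) * (2 * ctil * s)⁻¹ ≤ -Real.log 2 + (1 - θ) * Real.log Kbar := by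
    nlinarith
  calc τstar - δ = (τstar - δ) * (2 * ctil * s)⁻¹ * (2 * ctil * s) := by
        field_simp
    _ ≤ (-Real.log 2 + (1 - θ) * Real.log Kbar) * (2 * ctil * s) := by
        apply mul_le_mul_of_nonneg_right h1 hcs.le
    _ = 2 * ctil * s * (-Real.log 2 + (1 - θ) * Real.log Kbar) := by ring
end

section
/- Let ω : (0,∞) → (0,∞) be nondecreasing with μ(s) = ω(s)/s decreasing, μ(s) → ∞ as s → 0, and ω(s) → 0 as s → 0, and suppose limsup_j μ(2^{-j+1})/μ(2^{-j}) < 1. Define τ_m = c·r_m·(μ(r_m) - μ(r_{m-1})) with r_m = 2^{-m} and a fixed constant c > 0. Then τ_m → 0 as m → ∞, while if ∫₀¹ ω(s)/s ds = ∞ the series ∑_m τ_m diverges. -/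
open MeasureTheory Real Filter Set

/-!
Writing `a m = ω (2⁻¹ ^ m)`, the definition of `τ` reads `τ (m + 1) = c * (a (m + 1) - a m / 2)`.
Hence `τ → 0` because `ω → 0` at `0`. The partial sums of `τ` telescope to
`c / 2 * ∑ a (m + 1)` up to a bounded error, so a summable `τ` (whose terms are nonnegative since
`ω s / s` decreases) forces `∑ ω (2⁻¹ ^ m) < ∞`; this is the dyadic condensation of
`∫₀¹ ω(s)/s ds`, which is then finite.
-/

theorem summable_of_summable_succ_sub_mul {a : ℕ → ℝ} {θ : ℝ} (hθ₀ : 0 ≤ θ) (hθ₁ : θ < 1)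
    (ha : ∀ m, 0 ≤ a m) (hb : ∀ m, 0 ≤ a (m + 1) - θ * a m)
    (hsum : Summable fun m => a (m + 1) - θ * a m) : Summable a := by
  rw [← summable_nat_add_iff 1]
  refine summable_of_sum_range_le (c := ((∑' m, (a (m + 1) - θ * a m)) + θ * a 0) / (1 - θ))
    (fun m => ha (m + 1)) fun N => ?_
  have hpartial := hsum.sum_le_tsum (Finset.range N) fun m _ => hb m
  have hshift : ∑ m ∈ Finset.range N, a m + a N = ∑ m ∈ Finset.range N, a (m + 1) + a 0 := by
    rw [← Finset.sum_range_succ, Finset.sum_range_succ']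
  rw [Finset.sum_sub_distrib, ← Finset.mul_sum] at hpartial
  rw [le_div_iff₀ (by linarith)]
  nlinarith [ha N]

theorem integral_norm_Ioc_le_of_antitoneOn {f : ℝ → ℝ} {a b : ℝ} (hab : a ≤ b)
    (hf : AntitoneOn f (Icc a b)) (hf₀ : ∀ x ∈ Icc a b, 0 ≤ f x) :
    ∫ x in Ioc a b, ‖f x‖ ≤ (b - a) * f a := by
  have hint : IntegrableOn f (Ioc a b) :=
    (hf.integrableOn_isCompact isCompact_Icc).mono_set Ioc_subset_Icc_self
  calc ∫ x in Ioc a b, ‖f x‖ ≤ ∫ _ in Ioc a b, f a := by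
        refine setIntegral_mono_on hint.norm (integrableOn_const measure_Ioc_lt_top.ne)
          measurableSet_Ioc fun x hx => ?_
        rw [norm_of_nonneg (hf₀ x (Ioc_subset_Icc_self hx))]
        exact hf (left_mem_Icc.2 hab) (Ioc_subset_Icc_self hx) hx.1.le
    _ = (b - a) * f a := by
        rw [setIntegral_const, volume_real_Ioc_of_le hab, smul_eq_mul]

theorem integrableOn_Ioc_zero_one_of_summable_pow_mul {f : ℝ → ℝ} {q : ℝ} (hq₀ : 0 < q)
    (hq₁ : q < 1) (hf : AntitoneOn f (Ioi 0)) (hf₀ : ∀ x > 0, 0 ≤ f x)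
    (hsum : Summable fun m : ℕ => q ^ m * f (q ^ m)) : IntegrableOn f (Ioc 0 1) := by
  have hle : ∀ m : ℕ, q ^ (m + 1) ≤ q ^ m := fun m => pow_le_pow_of_le_one hq₀.le hq₁.le m.le_succ
  have hpiece_pos : ∀ m : ℕ, Icc (q ^ (m + 1)) (q ^ m) ⊆ Ioi 0 :=
    fun m x hx => (pow_pos hq₀ _).trans_le hx.1
  have hpiece : ∀ m : ℕ, IntegrableOn f (Ioc (q ^ (m + 1)) (q ^ m)) := fun m =>
    ((hf.mono (hpiece_pos m)).integrableOn_isCompact isCompact_Icc).mono_set Ioc_subset_Icc_self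
  have hcover : Ioc 0 1 ⊆ ⋃ m : ℕ, Ioc (q ^ (m + 1)) (q ^ m) := fun x hx =>
    mem_iUnion.2 (exists_nat_pow_near_of_lt_one hx.1 hx.2 hq₀ hq₁)
  refine (integrableOn_iUnion_of_summable_integral_norm hpiece ?_).mono_set hcover
  refine (((summable_nat_add_iff 1).2 hsum).mul_left q⁻¹).of_nonneg_of_le
    (fun m => integral_nonneg fun _ => norm_nonneg _) fun m => ?_
  have hfm : 0 ≤ f (q ^ (m + 1)) := hf₀ _ (pow_pos hq₀ _)
  calc ∫ x in Ioc (q ^ (m + 1)) (q ^ m), ‖f x‖ ≤ (q ^ m - q ^ (m + 1)) * f (q ^ (m + 1)) :=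
        integral_norm_Ioc_le_of_antitoneOn (hle m) (hf.mono (hpiece_pos m))
          fun x hx => hf₀ x (hpiece_pos m hx)
    _ ≤ q ^ m * f (q ^ (m + 1)) := by nlinarith [pow_pos hq₀ (m + 1)]
    _ = q⁻¹ * (q ^ (m + 1) * f (q ^ (m + 1))) := by
        rw [pow_succ, ← mul_assoc, mul_comm q⁻¹, mul_assoc _ q, mul_inv_cancel₀ hq₀.ne', mul_one]

theorem two_rpow_neg_natCast (m : ℕ) : (2 : ℝ) ^ (-(m : ℝ)) = 2⁻¹ ^ m := by
  rw [rpow_neg zero_le_two, rpow_natCast, inv_pow]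

theorem two_rpow_neg_natCast_succ_add_one (m : ℕ) :
    (2 : ℝ) ^ (-((m + 1 : ℕ) : ℝ) + 1) = 2⁻¹ ^ m := by
  rw [← two_rpow_neg_natCast]
  push_cast
  ring_nf

theorem pow_succ_mul_div_sub_div {q : ℝ} (hq : q ≠ 0) (m : ℕ) (x y : ℝ) :
    q ^ (m + 1) * (x / q ^ (m + 1) - y / q ^ m) = x - q * y := by
  field_simp
  ring

theorem stmt17_general (ω : ℝ → ℝ) (hωpos : ∀ s > (0:ℝ), 0 < ω s)
    (hμdec : StrictAntiOn (fun s => ω s / s) (Set.Ioi 0))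
    (hω0 : Tendsto ω (nhdsWithin 0 (Set.Ioi 0)) (nhds 0))
    (c : ℝ) (hc : 0 < c)
    (τ : ℕ → ℝ)
    (hτ : ∀ m : ℕ, τ m = c * (2:ℝ)^(-(m:ℝ)) *
      (ω ((2:ℝ)^(-(m:ℝ))) / (2:ℝ)^(-(m:ℝ)) -
        ω ((2:ℝ)^(-(m:ℝ)+1)) / (2:ℝ)^(-(m:ℝ)+1))) :
    Tendsto τ atTop (nhds 0) ∧
      (¬ IntegrableOn (fun s => ω s / s) (Set.Ioc (0:ℝ) 1) → ¬ Summable τ) := by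
  set q : ℝ := 2⁻¹
  have hq₀ : 0 < q := by norm_num
  have hq₁ : q < 1 := by norm_num
  have hτ_eq : ∀ m : ℕ, τ (m + 1) = c * (ω (q ^ (m + 1)) - q * ω (q ^ m)) := fun m => by
    rw [hτ, two_rpow_neg_natCast, two_rpow_neg_natCast_succ_add_one, mul_assoc,
      pow_succ_mul_div_sub_div hq₀.ne']
  have hωq : Tendsto (fun m : ℕ => ω (q ^ m)) atTop (nhds 0) :=
    hω0.comp (tendsto_pow_atTop_nhdsWithin_zero_of_lt_one hq₀ hq₁)
  refine ⟨?_, fun hnot hsum => hnot ?_⟩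
  · rw [← tendsto_add_atTop_iff_nat 1]
    simp_rw [hτ_eq]
    simpa using ((hωq.comp (tendsto_add_atTop_nat 1)).sub (hωq.const_mul q)).const_mul c
  · have hb : ∀ m : ℕ, 0 ≤ ω (q ^ (m + 1)) - q * ω (q ^ m) := fun m => by
      rw [← pow_succ_mul_div_sub_div hq₀.ne']
      exact mul_nonneg (pow_nonneg hq₀.le _) (sub_nonneg.2 (hμdec.antitoneOn
        (pow_pos hq₀ _) (pow_pos hq₀ _) (pow_le_pow_of_le_one hq₀.le hq₁.le m.le_succ)))
    have hbsum : Summable fun m : ℕ => ω (q ^ (m + 1)) - q * ω (q ^ m) := by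
      simpa [hτ_eq, hc.ne'] using ((summable_nat_add_iff 1).2 hsum).mul_left c⁻¹
    have hωsum := summable_of_summable_succ_sub_mul hq₀.le hq₁
      (fun m => (hωpos _ (pow_pos hq₀ m)).le) hb hbsum
    refine integrableOn_Ioc_zero_one_of_summable_pow_mul hq₀ hq₁ hμdec.antitoneOn
      (fun s hs => (div_pos (hωpos s hs) hs).le) ?_
    simpa [mul_div_cancel₀ _ (pow_pos hq₀ _).ne'] using hωsum

theorem stmt17 (ω : ℝ → ℝ) (hωpos : ∀ s > (0:ℝ), 0 < ω s)
    (hmono : MonotoneOn ω (Set.Ioi 0))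
    (hμdec : StrictAntiOn (fun s => ω s / s) (Set.Ioi 0))
    (hμinf : Tendsto (fun s => ω s / s) (nhdsWithin 0 (Set.Ioi 0)) atTop)
    (hω0 : Tendsto ω (nhdsWithin 0 (Set.Ioi 0)) (nhds 0))
    (hlimsup : limsup (fun j : ℕ => (ω ((2:ℝ)^(-(j:ℝ)+1)) / (2:ℝ)^(-(j:ℝ)+1)) /
        (ω ((2:ℝ)^(-(j:ℝ))) / (2:ℝ)^(-(j:ℝ)))) atTop < 1)
    (c : ℝ) (hc : 0 < c)
    (τ : ℕ → ℝ)
    (hτ : ∀ m : ℕ, τ m = c * (2:ℝ)^(-(m:ℝ)) *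
      (ω ((2:ℝ)^(-(m:ℝ))) / (2:ℝ)^(-(m:ℝ)) -
        ω ((2:ℝ)^(-(m:ℝ)+1)) / (2:ℝ)^(-(m:ℝ)+1))) :
    Tendsto τ atTop (nhds 0) ∧
      (¬ IntegrableOn (fun s => ω s / s) (Set.Ioc (0:ℝ) 1) → ¬ Summable τ) :=
  stmt17_general ω hωpos hμdec hω0 c hc τ hτ
end

section
/- Let I : (0, s̄) → [0,∞) be nonincreasing and satisfy I(s) ≤ D·Φ(s)·h(s)^{-2/(p-1)} where h(s) = exp(-ω(s)/s), Φ(s) = ((2s + (2/(p+3))ω(s))/s²)^{(p+3)/(p-1)}, p > 1, D > 0, and ω satisfies s^{γ₁} ≤ ω(s) ≤ ω₀ with 0 < γ₁ < 1. Then the quantity F(s) = (I(s))^{2/(p+1)}·s^{-2/(p+1)}·h(s)^{-2/(p+1)} + (I(s))^{(p+3)/(2(p+1))}·s^{-(p+3)/(2(p+1))}·h(s)^{-1/(p+1)} satisfies F(s) ≤ C(ν)·h(s)^{-2/(p-1)-ν} for every ν > 0, with C(ν) independent of s. -/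
open Real

private lemma exp_rpow'' (x y : ℝ) : Real.exp x ^ y = Real.exp (x * y) := by
  rw [Real.rpow_def_of_pos (Real.exp_pos x), Real.log_exp]

/-- polynomial growth is dominated by exponential -/
private lemma poly_le_exp (b ν : ℝ) (hb : 0 ≤ b) (hν : 0 < ν) :
    ∃ C : ℝ, 0 < C ∧ ∀ x : ℝ, 0 ≤ x → x ^ b ≤ C * Real.exp (ν * x) := by
  set n := ⌈b⌉₊ with hn
  refine ⟨1 + (Nat.factorial n : ℝ) / ν ^ n, by positivity, fun x hx => ?_⟩
  have hexp1 : (1:ℝ) ≤ Real.exp (ν * x) := by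
    rw [← Real.exp_zero]; exact Real.exp_le_exp.2 (by positivity)
  have hfact : (0:ℝ) < (Nat.factorial n : ℝ) := Nat.cast_pos.2 (Nat.factorial_pos n)
  have hνn : (0:ℝ) < ν ^ n := pow_pos hν n
  rcases le_total x 1 with h1 | h1
  · calc x ^ b ≤ 1 := Real.rpow_le_one hx h1 hb
    _ ≤ (1 + (Nat.factorial n : ℝ) / ν ^ n) * Real.exp (ν * x) := by
        nlinarith [Real.exp_pos (ν * x), div_nonneg hfact.le hνn.le]
  · have h2 : x ^ b ≤ x ^ (n : ℝ) :=
      Real.rpow_le_rpow_of_exponent_le h1 (Nat.le_ceil b)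
    have h3 : x ^ (n : ℝ) = x ^ n := Real.rpow_natCast x n
    have h4 : (ν * x) ^ n / (Nat.factorial n : ℝ) ≤ Real.exp (ν * x) :=
      Real.pow_div_factorial_le_exp (ν * x) (by positivity) n
    have h5 : x ^ n = (ν * x) ^ n / ν ^ n := by
      rw [mul_pow]; field_simp
    calc x ^ b ≤ x ^ n := by rw [← h3]; exact h2
    _ = (ν * x) ^ n / ν ^ n := h5
    _ ≤ ((Nat.factorial n : ℝ) * Real.exp (ν * x)) / ν ^ n := by
        gcongr
        calc (ν * x) ^ n = ((ν * x) ^ n / (Nat.factorial n : ℝ)) * (Nat.factorial n : ℝ) := by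
              field_simp
        _ ≤ Real.exp (ν * x) * (Nat.factorial n : ℝ) :=
              mul_le_mul_of_nonneg_right h4 hfact.le
        _ = (Nat.factorial n : ℝ) * Real.exp (ν * x) := by ring
    _ = ((Nat.factorial n : ℝ) / ν ^ n) * Real.exp (ν * x) := by ring
    _ ≤ (1 + (Nat.factorial n : ℝ) / ν ^ n) * Real.exp (ν * x) := by
        nlinarith [Real.exp_pos (ν * x), div_nonneg hfact.le hνn.le]

theorem stmt19 (p D γ₁ ω₀ sbar : ℝ) (hp : 1 < p) (hD : 0 < D)
    (hγ : 0 < γ₁) (hγ1 : γ₁ < 1) (hω₀ : 0 < ω₀) (hs : 0 < sbar)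
    (ω : ℝ → ℝ)
    (hωlb : ∀ s ∈ Set.Ioo (0:ℝ) sbar, s ^ γ₁ ≤ ω s)
    (hωub : ∀ s ∈ Set.Ioo (0:ℝ) sbar, ω s ≤ ω₀)
    (I : ℝ → ℝ) (hI0 : ∀ s ∈ Set.Ioo (0:ℝ) sbar, 0 ≤ I s)
    (hImono : AntitoneOn I (Set.Ioo 0 sbar))
    (hIbound : ∀ s ∈ Set.Ioo (0:ℝ) sbar,
      I s ≤ D * ((2*s + (2/(p+3))*ω s)/s^2) ^ ((p+3)/(p-1)) *
        Real.exp (-(ω s / s)) ^ (-(2:ℝ)/(p-1))) :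
    ∀ ν > (0:ℝ), ∃ C : ℝ, ∀ s ∈ Set.Ioo (0:ℝ) sbar,
      (I s) ^ ((2:ℝ)/(p+1)) * s ^ (-(2:ℝ)/(p+1)) *
          Real.exp (-(ω s / s)) ^ (-(2:ℝ)/(p+1)) +
        (I s) ^ ((p+3)/(2*(p+1))) * s ^ (-(p+3)/(2*(p+1))) *
          Real.exp (-(ω s / s)) ^ (-(1:ℝ)/(p+1))
      ≤ C * Real.exp (-(ω s / s)) ^ (-(2:ℝ)/(p-1) - ν) := by
  intro ν hν
  have hp1 : (0:ℝ) < p - 1 := by linarith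
  have hp1' : (0:ℝ) < p + 1 := by linarith
  have hp3 : (0:ℝ) < p + 3 := by linarith
  set q : ℝ := (p+3)/(p-1) with hq
  have hqpos : 0 < q := by positivity
  set A : ℝ := 2*sbar + (2/(p+3))*ω₀ with hA
  have hApos : 0 < A := by positivity
  -- main per-term lemma
  have key : ∀ e g : ℝ, 0 < e → 0 ≤ g → (2/(p-1))*e + g = 2/(p-1) →
      ∃ C : ℝ, 0 ≤ C ∧ ∀ s ∈ Set.Ioo (0:ℝ) sbar,
      (I s) ^ e * s ^ (-e) * Real.exp ((ω s / s) * g)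
        ≤ C * Real.exp ((ω s / s) * (2/(p-1) + ν)) := by
    intro e g he hg hge
    set a : ℝ := 2*(q*e) + e with ha
    have hapos : 0 < a := by positivity
    have hγne : (1:ℝ) - γ₁ ≠ 0 := by linarith
    set b : ℝ := a / (1 - γ₁) with hb
    have hbpos : 0 < b := by
      apply div_pos hapos; linarith
    obtain ⟨C₁, hC₁pos, hC₁⟩ := poly_le_exp b ν hbpos.le hν
    refine ⟨D ^ e * A ^ (q*e) * C₁, by positivity, fun s hsmem => ?_⟩
    obtain ⟨hs0, hssb⟩ := hsmem
    set t : ℝ := ω s / s with ht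
    have hωs : 0 < ω s := lt_of_lt_of_le (Real.rpow_pos_of_pos hs0 γ₁) (hωlb s ⟨hs0, hssb⟩)
    have htpos : 0 < t := div_pos hωs hs0
    -- bound on I
    have hIb := hIbound s ⟨hs0, hssb⟩
    have hbase : (0:ℝ) < 2*s + (2/(p+3))*ω s := by positivity
    have hbaseA : (2*s + (2/(p+3))*ω s)/s^2 ≤ A / s^2 := by
      gcongr
      have h1 : ω s ≤ ω₀ := hωub s ⟨hs0, hssb⟩
      have h2 : (0:ℝ) < 2/(p+3) := by positivity
      nlinarith
    have hIle : I s ≤ D * (A/s^2) ^ q * Real.exp (t * (2/(p-1))) := by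
      calc I s ≤ D * ((2*s + (2/(p+3))*ω s)/s^2) ^ q *
          Real.exp (-(ω s / s)) ^ (-(2:ℝ)/(p-1)) := hIb
      _ ≤ D * (A/s^2) ^ q * Real.exp (-(ω s / s)) ^ (-(2:ℝ)/(p-1)) := by
          apply mul_le_mul_of_nonneg_right ?_ (Real.rpow_nonneg (Real.exp_pos _).le _)
          apply mul_le_mul_of_nonneg_left ?_ hD.le
          exact Real.rpow_le_rpow (by positivity) hbaseA hqpos.le
      _ = D * (A/s^2) ^ q * Real.exp (t * (2/(p-1))) := by
          rw [exp_rpow'']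
          congr 1
          exact congrArg Real.exp (by ring)
    -- raise to power e
    have hIe : (I s) ^ e ≤ D ^ e * (A/s^2) ^ (q*e) * Real.exp (t * (2*e/(p-1))) := by
      calc (I s) ^ e ≤ (D * (A/s^2) ^ q * Real.exp (t * (2/(p-1)))) ^ e :=
        Real.rpow_le_rpow (hI0 s ⟨hs0, hssb⟩) hIle he.le
      _ = D ^ e * ((A/s^2) ^ q) ^ e * (Real.exp (t * (2/(p-1)))) ^ e := by
          rw [Real.mul_rpow (by positivity) (Real.exp_pos _).le,
              Real.mul_rpow hD.le (Real.rpow_nonneg (by positivity) _)]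
      _ = D ^ e * (A/s^2) ^ (q*e) * Real.exp (t * (2*e/(p-1))) := by
          rw [← Real.rpow_mul (by positivity : (0:ℝ) ≤ A/s^2), exp_rpow'']
          congr 1
          exact congrArg Real.exp (by ring)
    -- expand (A/s²)^(qe)
    have hAs : (A/s^2) ^ (q*e) = A ^ (q*e) * s ^ (-(2*(q*e))) := by
      have h6 : ((s:ℝ)^2) ^ (q*e) = s ^ (2*(q*e)) := by
        rw [← Real.rpow_natCast s 2, ← Real.rpow_mul hs0.le]
        norm_num
      rw [Real.div_rpow hApos.le (by positivity), h6, Real.rpow_neg hs0.le,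
        div_eq_mul_inv]
    -- combine
    have hstep : (I s) ^ e * s ^ (-e) * Real.exp (t * g)
        ≤ D ^ e * A ^ (q*e) * s ^ (-a) * Real.exp (t * (2/(p-1))) := by
      have hse : (0:ℝ) ≤ s ^ (-e) := (Real.rpow_pos_of_pos hs0 _).le
      have step1 : (I s) ^ e * s ^ (-e) * Real.exp (t * g)
          ≤ (D ^ e * (A/s^2) ^ (q*e) * Real.exp (t * (2*e/(p-1)))) * s ^ (-e) *
            Real.exp (t * g) := by
        apply mul_le_mul_of_nonneg_right ?_ (Real.exp_pos _).le
        exact mul_le_mul_of_nonneg_right hIe hse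
      have step2 : (D ^ e * (A/s^2) ^ (q*e) * Real.exp (t * (2*e/(p-1)))) * s ^ (-e) *
            Real.exp (t * g)
          = D ^ e * A ^ (q*e) * (s ^ (-(2*(q*e))) * s ^ (-e)) *
            (Real.exp (t * (2*e/(p-1))) * Real.exp (t * g)) := by
        rw [hAs]; ring
      have step3 : D ^ e * A ^ (q*e) * (s ^ (-(2*(q*e))) * s ^ (-e)) *
            (Real.exp (t * (2*e/(p-1))) * Real.exp (t * g))
          = D ^ e * A ^ (q*e) * s ^ (-a) * Real.exp (t * (2/(p-1))) := by
        rw [← Real.rpow_add hs0, ← Real.exp_add]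
        have h3 : -(2*(q*e)) + -e = -a := by rw [ha]; ring
        have h4 : t * (2*e/(p-1)) + t * g = t * (2/(p-1)) := by
          have h5 : 2*e/(p-1) + g = 2/(p-1) := by rw [← hge]; ring
          rw [← mul_add, h5]
        rw [h3, h4]
      calc (I s) ^ e * s ^ (-e) * Real.exp (t * g) ≤ _ := step1
      _ = _ := step2
      _ = _ := step3
    -- polynomial bound
    have hpoly : s ^ (-a) ≤ C₁ * Real.exp (ν * t) := by
      have hx : (0:ℝ) ≤ s ^ (γ₁ - 1) := (Real.rpow_pos_of_pos hs0 _).le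
      have h1 : s ^ (-a) = (s ^ (γ₁ - 1)) ^ b := by
        rw [← Real.rpow_mul hs0.le]
        congr 1
        rw [hb]; field_simp; ring
      have h3 : s ^ (γ₁ - 1) ≤ t := by
        have h4 : s ^ γ₁ ≤ ω s := hωlb s ⟨hs0, hssb⟩
        have h5 : s ^ (γ₁ - 1) = s ^ γ₁ / s := by
          rw [Real.rpow_sub hs0, Real.rpow_one]
        rw [h5, ht]
        gcongr
      calc s ^ (-a) = (s ^ (γ₁ - 1)) ^ b := h1
      _ ≤ C₁ * Real.exp (ν * s ^ (γ₁ - 1)) := hC₁ _ hx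
      _ ≤ C₁ * Real.exp (ν * t) := by
          gcongr
    -- finish
    calc (I s) ^ e * s ^ (-e) * Real.exp (t * g)
        ≤ D ^ e * A ^ (q*e) * s ^ (-a) * Real.exp (t * (2/(p-1))) := hstep
    _ ≤ D ^ e * A ^ (q*e) * (C₁ * Real.exp (ν * t)) * Real.exp (t * (2/(p-1))) := by
        apply mul_le_mul_of_nonneg_right ?_ (Real.exp_pos _).le
        apply mul_le_mul_of_nonneg_left hpoly (by positivity)
    _ = (D ^ e * A ^ (q*e) * C₁) * Real.exp (t * (2/(p-1) + ν)) := by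
        have h7 : Real.exp (t * (2/(p-1) + ν)) =
            Real.exp (ν * t) * Real.exp (t * (2/(p-1))) := by
          rw [← Real.exp_add]
          exact congrArg Real.exp (by ring)
        rw [h7]; ring
  -- apply to the two terms
  obtain ⟨C₂, hC₂0, hC₂⟩ := key (2/(p+1)) (2/(p+1)) (by positivity) (by positivity)
    (by field_simp; ring)
  obtain ⟨C₃, hC₃0, hC₃⟩ := key ((p+3)/(2*(p+1))) (1/(p+1)) (by positivity) (by positivity)
    (by field_simp; ring)
  refine ⟨C₂ + C₃, fun s hsmem => ?_⟩
  obtain ⟨hs0, hssb⟩ := hsmem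
  have e1 : Real.exp (-(ω s / s)) ^ (-(2:ℝ)/(p+1)) = Real.exp ((ω s / s) * (2/(p+1))) := by
    rw [exp_rpow'']; exact congrArg Real.exp (by ring)
  have e2 : Real.exp (-(ω s / s)) ^ (-(1:ℝ)/(p+1)) = Real.exp ((ω s / s) * (1/(p+1))) := by
    rw [exp_rpow'']; exact congrArg Real.exp (by ring)
  have e3 : Real.exp (-(ω s / s)) ^ (-(2:ℝ)/(p-1) - ν) = Real.exp ((ω s / s) * (2/(p-1) + ν)) := by
    rw [exp_rpow'']; exact congrArg Real.exp (by ring)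
  have n1 : (-(2:ℝ)/(p+1)) = -(2/(p+1)) := by ring
  have n2 : (-(p+3)/(2*(p+1))) = -((p+3)/(2*(p+1))) := by ring
  rw [e1, e2, e3, n1, n2]
  have h1 := hC₂ s ⟨hs0, hssb⟩
  have h2 := hC₃ s ⟨hs0, hssb⟩
  calc (I s) ^ ((2:ℝ)/(p+1)) * s ^ (-(2/(p+1))) * Real.exp ((ω s / s) * (2/(p+1))) +
      (I s) ^ ((p+3)/(2*(p+1))) * s ^ (-((p+3)/(2*(p+1)))) * Real.exp ((ω s / s) * (1/(p+1)))
      ≤ C₂ * Real.exp ((ω s / s) * (2/(p-1) + ν)) + C₃ * Real.exp ((ω s / s) * (2/(p-1) + ν)) :=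
        add_le_add h1 h2
  _ = (C₂ + C₃) * Real.exp ((ω s / s) * (2/(p-1) + ν)) := by ring
end
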